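/- Let (T,ℓ) be a rooted binary phylogenetic X-tree with ℓ(e) > 0 for every edge e, and let Y be a nonempty proper subset of X. Then Δ(Y,s) = 0 for every diversity index score vector s of a diversity index satisfying the allocation property if and only if Y = X[v] for some vertex v that is a child of the root ρ; that is, the diversity difference vanishes identically exactly when Y is a monophyletic clade whose most recent common ancestor is adjacent to the root. -/
import Mathlib


open scoped Classical

/-- Data of a rooted tree: a finite vertex set, a root, and a parent map
(edges are directed away from the root; the parent of the root is the root itself). -/
structure PreTree (V : Type*) where
  verts : Finset V
  root : V
  par : V → V

namespace PreTree

variable {V : Type*}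

/-- `T` is a well-formed rooted tree. -/
def IsTree (T : PreTree V) : Prop :=
  T.root ∈ T.verts ∧ (∀ v ∈ T.verts, T.par v ∈ T.verts) ∧ T.par T.root = T.root ∧
    ∀ v ∈ T.verts, ∃ n : ℕ, T.par^[n] v = T.root

/-- The edges of `T`, identified with their head (the endpoint further from the root):
every non-root vertex `v` yields the edge `(par v, v)`. -/
noncomputable def edges (T : PreTree V) : Finset V := T.verts.erase T.root

/-- The children of a vertex `v`. -/
noncomputable def children (T : PreTree V) (v : V) : Finset V :=
  T.verts.filter fun w => w ≠ T.root ∧ T.par w = v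

/-- The leaves (taxa) of `T`: vertices of out-degree `0`. -/
noncomputable def leaves (T : PreTree V) : Finset V :=
  T.verts.filter fun v => T.children v = ∅

/-- `T` is a rooted binary `X`-tree: a rooted tree in which the root has out-degree `2`
and every other vertex has out-degree `0` (a leaf) or `2`. -/
def IsBinaryTree (T : PreTree V) : Prop :=
  T.IsTree ∧ (∀ v ∈ T.verts, (T.children v).card = 0 ∨ (T.children v).card = 2) ∧
    (T.children T.root).card = 2

/-- `x` lies (weakly) below `v`, i.e. `v` is on the directed path from the root to `x`. -/
def below (T : PreTree V) (x v : V) : Prop := ∃ n : ℕ, T.par^[n] x = v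

/-- The leaf set `X[v]` of the pendant subtree `T[v]`. -/
noncomputable def clade (T : PreTree V) (v : V) : Finset V :=
  T.leaves.filter fun x => T.below x v

/-- The phylogenetic diversity of `Y ⊆ X`: the total length of the edges of the
minimal subtree of `T` connecting the root to all leaves in `Y`. -/
noncomputable def PD (T : PreTree V) (ℓ : V → ℝ) (Y : Finset V) : ℝ :=
  ∑ e ∈ T.edges.filter (fun e => ∃ x ∈ Y, T.below x e), ℓ e

/-- The diversity-index score `φ(x) = ∑_{e ∈ E(T)} γ(x,e)·ℓ(e)`. -/
noncomputable def score (T : PreTree V) (ℓ : V → ℝ) (γ : V → V → ℝ) (x : V) : ℝ :=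
  ∑ e ∈ T.edges, γ x e * ℓ e

/-- The vertex set of the pendant subtree `T[v]`. -/
noncomputable def desc (T : PreTree V) (v : V) : Finset V :=
  T.verts.filter fun w => T.below w v

/-- An isomorphism of tree shapes from the pendant subtree `T[v₁]` to `T[v₂]`. -/
def IsShapeIso (T : PreTree V) (v₁ v₂ : V) (f : V → V) : Prop :=
  f v₁ = v₂ ∧ Set.BijOn f (T.desc v₁ : Set V) ((T.desc v₂ : Set V)) ∧
    ∀ w ∈ T.desc v₁, w ≠ v₁ → f (T.par w) = T.par (f w)

/-- `γ` are the coefficients of a diversity index of `(T, ℓ)`: they are non-negative and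
satisfy descent, neutrality and convexity. -/
def IsDivIndex (T : PreTree V) (ℓ : V → ℝ) (γ : V → V → ℝ) : Prop :=
  (∀ x e, 0 ≤ γ x e) ∧
  (∀ x : V, ∀ e ∈ T.edges, x ∉ T.clade e → γ x e = 0) ∧
  (∀ e₁ ∈ T.edges, ∀ e₂ ∈ T.edges, ∀ f : V → V, T.IsShapeIso e₁ e₂ f →
      ∀ x ∈ T.clade e₁, γ x e₁ = γ (f x) e₂) ∧
  (∑ x ∈ T.leaves, T.score ℓ γ x = T.PD ℓ T.leaves)

/-- The allocation property: each edge distributes exactly its own length,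
`∑_{x ∈ X[v]} γ(x,(u,v)) = 1` for every edge `(u,v)`. -/
def Allocation (T : PreTree V) (γ : V → V → ℝ) : Prop :=
  ∀ e ∈ T.edges, ∑ x ∈ T.clade e, γ x e = 1

end PreTree

namespace PreTree

variable {V : Type*} {T : PreTree V}

lemma below_refl (x : V) : T.below x x := ⟨0, rfl⟩

lemma below_trans {x y z : V} (h1 : T.below x y) (h2 : T.below y z) : T.below x z := by
  obtain ⟨n, hn⟩ := h1; obtain ⟨m, hm⟩ := h2
  exact ⟨m + n, by rw [Function.iterate_add_apply, hn, hm]⟩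

lemma below_comparable {x u v : V} (h1 : T.below x u) (h2 : T.below x v) :
    T.below u v ∨ T.below v u := by
  obtain ⟨n, hn⟩ := h1; obtain ⟨m, hm⟩ := h2
  rcases le_total n m with h | h
  · exact Or.inl ⟨m - n, by rw [← hn, ← Function.iterate_add_apply, Nat.sub_add_cancel h, hm]⟩
  · exact Or.inr ⟨n - m, by rw [← hm, ← Function.iterate_add_apply, Nat.sub_add_cancel h, hn]⟩

lemma iterate_root (hT : T.IsTree) (n : ℕ) : T.par^[n] T.root = T.root :=
  Function.iterate_fixed hT.2.2.1 n

lemma iterate_mem (hT : T.IsTree) {w : V} (hw : w ∈ T.verts) (n : ℕ) :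
    T.par^[n] w ∈ T.verts := by
  induction n with
  | zero => exact hw
  | succ n ih => rw [Function.iterate_succ_apply']; exact hT.2.1 _ ih

lemma mem_verts_of_below (hT : T.IsTree) {w v : V} (hw : w ∈ T.verts) (h : T.below w v) :
    v ∈ T.verts := by
  obtain ⟨n, hn⟩ := h; exact hn ▸ iterate_mem hT hw n

lemma eq_root_of_root_below (hT : T.IsTree) {v : V} (h : T.below T.root v) : v = T.root := by
  obtain ⟨n, hn⟩ := h; rw [iterate_root hT] at hn; exact hn.symm

lemma eq_root_of_cycle (hT : T.IsTree) {u : V} (hu : u ∈ T.verts) {p : ℕ} (hp : 0 < p)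
    (hc : T.par^[p] u = u) : u = T.root := by
  obtain ⟨k, hk⟩ := hT.2.2.2 u hu
  rcases Nat.eq_zero_or_pos k with rfl | hk0
  · exact hk
  have hcycle : T.par^[p * k] u = u := by
    rw [Function.iterate_mul]; exact Function.iterate_fixed hc k
  have hle : k ≤ p * k := Nat.le_mul_of_pos_left k hp
  have h2 : T.par^[p * k] u = T.root := by
    conv_lhs => rw [← Nat.sub_add_cancel hle]
    rw [Function.iterate_add_apply, hk, iterate_root hT]
  rw [hcycle] at h2; exact h2

lemma below_antisymm (hT : T.IsTree) {u v : V} (hu : u ∈ T.verts)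
    (h1 : T.below u v) (h2 : T.below v u) : u = v := by
  obtain ⟨n, hn⟩ := h1; obtain ⟨m, hm⟩ := h2
  rcases Nat.eq_zero_or_pos (m + n) with h0 | hpos
  · have hn0 : n = 0 := by omega
    subst hn0; exact hn
  · have hcyc : T.par^[m + n] u = u := by rw [Function.iterate_add_apply, hn, hm]
    have hr := eq_root_of_cycle hT hu hpos hcyc
    subst hr
    rw [iterate_root hT] at hn
    exact hn.symm ▸ rfl

lemma mem_children_iff {c v : V} :
    c ∈ T.children v ↔ c ∈ T.verts ∧ c ≠ T.root ∧ T.par c = v := by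
  simp [children, and_assoc]

lemma below_of_child {c v : V} (hc : c ∈ T.children v) : T.below c v :=
  ⟨1, (mem_children_iff.mp hc).2.2⟩

lemma exists_child_of_below (hT : T.IsTree) {x v : V} (hx : x ∈ T.verts)
    (h : T.below x v) (hne : x ≠ v) :
    ∃ c ∈ T.children v, T.below x c := by
  classical
  have hex : ∃ n, T.par^[n] x = v := h
  have hn : T.par^[Nat.find hex] x = v := Nat.find_spec hex
  set n := Nat.find hex with hnn
  have hn0 : n ≠ 0 := by
    intro h0; apply hne; rw [← hn, h0]; rfl
  have hpc : T.par (T.par^[n - 1] x) = v := by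
    rw [← Function.iterate_succ_apply' T.par (n - 1) x]
    have he : (n - 1).succ = n := by omega
    rw [he]; exact hn
  have hcr : T.par^[n - 1] x ≠ T.root := by
    intro hr
    have hveq : v = T.root := by rw [← hpc, hr, hT.2.2.1]
    have : T.par^[n - 1] x = v := by rw [hr, hveq]
    exact absurd this (Nat.find_min hex (by omega))
  exact ⟨T.par^[n - 1] x, mem_children_iff.mpr ⟨iterate_mem hT hx _, hcr, hpc⟩, ⟨n - 1, rfl⟩⟩

lemma child_ne (hT : T.IsTree) {c v : V} (hc : c ∈ T.children v) : c ≠ v := by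
  intro h
  obtain ⟨hcv, hcr, hpc⟩ := mem_children_iff.mp hc
  apply hcr
  exact eq_root_of_cycle hT hcv (p := 1) one_pos (by simpa [h] using hpc)

end PreTree

namespace PreTree

variable {V : Type*} {T : PreTree V}

lemma mem_clade_iff {x v : V} : x ∈ T.clade v ↔ x ∈ T.leaves ∧ T.below x v := by
  simp [clade]

lemma mem_desc_iff {w v : V} : w ∈ T.desc v ↔ w ∈ T.verts ∧ T.below w v := by
  simp [desc]

lemma leaves_subset_verts : T.leaves ⊆ T.verts := Finset.filter_subset _ _

lemma edges_subset_verts : T.edges ⊆ T.verts := Finset.erase_subset _ _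

lemma edge_ne_root {e : V} (he : e ∈ T.edges) : e ≠ T.root := Finset.ne_of_mem_erase he

lemma clade_mono {u v : V} (h : T.below u v) : T.clade u ⊆ T.clade v := by
  intro x hx
  obtain ⟨hxl, hxb⟩ := mem_clade_iff.mp hx
  exact mem_clade_iff.mpr ⟨hxl, below_trans hxb h⟩

lemma exists_leaf_below (hT : T.IsTree) {v : V} (hv : v ∈ T.verts) :
    ∃ x ∈ T.leaves, T.below x v := by
  have key : ∀ n : ℕ, ∀ v ∈ T.verts, (T.desc v).card ≤ n → ∃ x ∈ T.leaves, T.below x v := by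
    intro n
    induction n with
    | zero =>
      intro v hv hcard
      exfalso
      have hm : v ∈ T.desc v := mem_desc_iff.mpr ⟨hv, below_refl v⟩
      have := Finset.card_pos.mpr ⟨v, hm⟩
      omega
    | succ n ih =>
      intro v hv hcard
      by_cases hleaf : T.children v = ∅
      · exact ⟨v, by simp [leaves, hv, hleaf], below_refl v⟩
      · obtain ⟨c, hc⟩ := Finset.nonempty_iff_ne_empty.mpr hleaf
        have hcb : T.below c v := below_of_child hc
        have hcv : c ∈ T.verts := (mem_children_iff.mp hc).1
        have hsub : T.desc c ⊆ T.desc v := by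
          intro w hw
          obtain ⟨hw1, hw2⟩ := mem_desc_iff.mp hw
          exact mem_desc_iff.mpr ⟨hw1, below_trans hw2 hcb⟩
        have hvnot : v ∉ T.desc c := by
          intro hmem
          have hbc : T.below v c := (mem_desc_iff.mp hmem).2
          have := below_antisymm hT hcv hcb hbc
          exact (child_ne hT hc) this
        have hlt : (T.desc c).card < (T.desc v).card :=
          Finset.card_lt_card ((Finset.ssubset_iff_of_subset hsub).mpr
            ⟨v, mem_desc_iff.mpr ⟨hv, below_refl v⟩, hvnot⟩)
        obtain ⟨x, hx, hxb⟩ := ih c hcv (by omega)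
        exact ⟨x, hx, below_trans hxb hcb⟩
  exact key _ v hv le_rfl

lemma clade_nonempty (hT : T.IsTree) {e : V} (he : e ∈ T.edges) : (T.clade e).Nonempty := by
  obtain ⟨x, hx, hb⟩ := exists_leaf_below hT (edges_subset_verts he)
  exact ⟨x, mem_clade_iff.mpr ⟨hx, hb⟩⟩

lemma root_notMem_desc (hT : T.IsTree) {e : V} (he : e ∈ T.edges) : T.root ∉ T.desc e := by
  intro h
  exact edge_ne_root he (eq_root_of_root_below hT (mem_desc_iff.mp h).2)

/-- If `x` is below a child-of-root clade head `v` and below an edge `e`, then `e` is in the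
subtree of `v`. -/
lemma below_edge_of_below_rootchild (hT : T.IsTree) {v e x : V} (hv : v ∈ T.children T.root)
    (he : e ∈ T.edges) (hxv : T.below x v) (hxe : T.below x e) : T.below e v := by
  rcases below_comparable hxe hxv with h | h
  · exact h
  · -- v below e : then e = v or e = root
    obtain ⟨k, hk⟩ := h
    rcases Nat.eq_zero_or_pos k with rfl | hkpos
    · exact hk ▸ below_refl v
    · exfalso
      apply edge_ne_root he
      have : T.par^[k] v = T.par^[k - 1] (T.par v) := by
        rw [← Function.iterate_succ_apply]
        congr 1; omega
      rw [this, (mem_children_iff.mp hv).2.2, iterate_root hT] at hk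
      exact hk.symm

end PreTree

namespace PreTree

variable {V : Type*} {T : PreTree V}

lemma desc_mem_verts {w v : V} (h : w ∈ T.desc v) : w ∈ T.verts := (mem_desc_iff.mp h).1

lemma iso_mapsTo_desc {e₁ e₂ : V} {f : V → V} (hf : T.IsShapeIso e₁ e₂ f) {w : V}
    (hw : w ∈ T.desc e₁) : f w ∈ T.desc e₂ := by
  have := hf.2.1.1 (by exact_mod_cast hw : w ∈ (T.desc e₁ : Set V))
  exact_mod_cast this

lemma iso_leaf_iff (hT : T.IsTree) {e₁ e₂ : V} (he₁ : e₁ ∈ T.edges) (he₂ : e₂ ∈ T.edges)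
    {f : V → V} (hf : T.IsShapeIso e₁ e₂ f) {w : V} (hw : w ∈ T.desc e₁) :
    w ∈ T.leaves ↔ f w ∈ T.leaves := by
  obtain ⟨hfe, hbij, hcomm⟩ := hf
  have hwv : w ∈ T.verts := desc_mem_verts hw
  have hfw : f w ∈ T.desc e₂ := iso_mapsTo_desc ⟨hfe, hbij, hcomm⟩ hw
  have hfwv : f w ∈ T.verts := desc_mem_verts hfw
  have key : (T.children w).Nonempty ↔ (T.children (f w)).Nonempty := by
    constructor
    · rintro ⟨c, hc⟩
      obtain ⟨hcv, hcr, hpc⟩ := mem_children_iff.mp hc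
      have hcdesc : c ∈ T.desc e₁ :=
        mem_desc_iff.mpr ⟨hcv, below_trans (below_of_child hc) (mem_desc_iff.mp hw).2⟩
      have hce : c ≠ e₁ := by
        intro h
        subst h
        have h1 : T.below w c := (mem_desc_iff.mp hw).2
        have h2 : T.below c w := below_of_child hc
        exact (child_ne hT hc) (below_antisymm hT hcv h2 h1)
      have hcomm' := hcomm c hcdesc hce
      rw [hpc] at hcomm'
      have hfcr : f c ≠ T.root := by
        intro h
        apply root_notMem_desc hT he₂
        rw [← h]
        exact iso_mapsTo_desc ⟨hfe, hbij, hcomm⟩ hcdesc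
      refine ⟨f c, mem_children_iff.mpr ⟨desc_mem_verts (iso_mapsTo_desc ⟨hfe, hbij, hcomm⟩ hcdesc), hfcr, ?_⟩⟩
      rw [← hcomm']
    · rintro ⟨c', hc'⟩
      obtain ⟨hc'v, hc'r, hpc'⟩ := mem_children_iff.mp hc'
      have hc'desc : c' ∈ T.desc e₂ :=
        mem_desc_iff.mpr ⟨hc'v, below_trans (below_of_child hc') (mem_desc_iff.mp hfw).2⟩
      obtain ⟨c, hcdesc, hfc⟩ := hbij.2.2 (by exact_mod_cast hc'desc : c' ∈ (T.desc e₂ : Set V))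
      have hcdesc' : c ∈ T.desc e₁ := by exact_mod_cast hcdesc
      have hcv : c ∈ T.verts := desc_mem_verts hcdesc'
      have hce : c ≠ e₁ := by
        intro h
        subst h
        rw [hfe] at hfc
        -- c' = e₂ is a child of f w, and f w is below e₂ : cycle
        obtain ⟨m, hm⟩ := (mem_desc_iff.mp hfw).2
        have hcyc : T.par^[m + 1] e₂ = e₂ := by
          rw [Function.iterate_add_apply]
          simpa [hfc, hpc'] using hm
        exact edge_ne_root he₂ (eq_root_of_cycle hT (edges_subset_verts he₂) (by omega) hcyc)
      have hcomm' := hcomm c hcdesc' hce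
      rw [hfc, hpc'] at hcomm'
      -- f (par c) = f w, injectivity gives par c = w
      have hparc : T.par c ∈ T.desc e₁ := by
        obtain ⟨m, hm⟩ := (mem_desc_iff.mp hcdesc').2
        have hm0 : m ≠ 0 := by
          intro h0; apply hce; rw [← hm, h0]; rfl
        refine mem_desc_iff.mpr ⟨hT.2.1 _ hcv, ⟨m - 1, ?_⟩⟩
        rw [← Function.iterate_succ_apply]
        have : (m-1).succ = m := by omega
        rw [this]; exact hm
      have heq : T.par c = w := by
        apply hbij.2.1 (by exact_mod_cast hparc) (by exact_mod_cast hw)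
        exact hcomm'
      have hcr : c ≠ T.root := by
        intro h
        apply root_notMem_desc hT he₁
        rw [← h]; exact hcdesc'
      exact ⟨c, mem_children_iff.mpr ⟨hcv, hcr, heq⟩⟩
  simp only [leaves, Finset.mem_filter, hwv, hfwv, true_and]
  rw [← not_iff_not]
  simpa [← Finset.nonempty_iff_ne_empty] using key

lemma iso_clade_bijOn (hT : T.IsTree) {e₁ e₂ : V} (he₁ : e₁ ∈ T.edges) (he₂ : e₂ ∈ T.edges)
    {f : V → V} (hf : T.IsShapeIso e₁ e₂ f) :
    Set.BijOn f (T.clade e₁ : Set V) (T.clade e₂ : Set V) := by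
  have hcd : ∀ x : V, x ∈ T.clade e₁ → x ∈ T.desc e₁ := by
    intro x hx
    obtain ⟨hxl, hxb⟩ := mem_clade_iff.mp hx
    exact mem_desc_iff.mpr ⟨leaves_subset_verts hxl, hxb⟩
  have hcd₂ : ∀ x : V, x ∈ T.clade e₂ → x ∈ T.desc e₂ := by
    intro x hx
    obtain ⟨hxl, hxb⟩ := mem_clade_iff.mp hx
    exact mem_desc_iff.mpr ⟨leaves_subset_verts hxl, hxb⟩
  refine ⟨?_, ?_, ?_⟩
  · intro x hx
    have hx' : x ∈ T.clade e₁ := by exact_mod_cast hx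
    have hxd := hcd x hx'
    have hfxd := iso_mapsTo_desc hf hxd
    have hfxl : f x ∈ T.leaves := (iso_leaf_iff hT he₁ he₂ hf hxd).mp (mem_clade_iff.mp hx').1
    exact_mod_cast mem_clade_iff.mpr ⟨hfxl, (mem_desc_iff.mp hfxd).2⟩
  · intro x hx y hy hxy
    exact hf.2.1.2.1 (by exact_mod_cast hcd x (by exact_mod_cast hx))
      (by exact_mod_cast hcd y (by exact_mod_cast hy)) hxy
  · intro y hy
    have hy' : y ∈ T.clade e₂ := by exact_mod_cast hy
    obtain ⟨w, hw, hfw⟩ := hf.2.1.2.2 (by exact_mod_cast hcd₂ y hy' : y ∈ (T.desc e₂ : Set V))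
    have hw' : w ∈ T.desc e₁ := by exact_mod_cast hw
    have hwl : w ∈ T.leaves := by
      rw [iso_leaf_iff hT he₁ he₂ hf hw', hfw]
      exact (mem_clade_iff.mp hy').1
    exact ⟨w, by exact_mod_cast mem_clade_iff.mpr ⟨hwl, (mem_desc_iff.mp hw').2⟩, hfw⟩

lemma iso_clade_card (hT : T.IsTree) {e₁ e₂ : V} (he₁ : e₁ ∈ T.edges) (he₂ : e₂ ∈ T.edges)
    {f : V → V} (hf : T.IsShapeIso e₁ e₂ f) :
    (T.clade e₁).card = (T.clade e₂).card := by
  have hb := iso_clade_bijOn hT he₁ he₂ hf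
  have himg : (T.clade e₁).image f = T.clade e₂ := by
    apply Finset.coe_injective
    rw [Finset.coe_image]
    exact hb.image_eq
  rw [← himg]
  exact (Finset.card_image_of_injOn hb.2.1).symm

end PreTree

namespace PreTree

variable {V : Type*} {T : PreTree V}

/-- The fair proportion index coefficients. -/
noncomputable def fp (T : PreTree V) : V → V → ℝ :=
  fun x e => if x ∈ T.clade e then ((T.clade e).card : ℝ)⁻¹ else 0

lemma fp_sum_subset {Z : Finset V} (e : V) (hZ : T.clade e ⊆ Z) :
    ∑ x ∈ Z, T.fp x e = ∑ x ∈ T.clade e, T.fp x e := by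
  refine (Finset.sum_subset hZ ?_).symm
  intro x _ hx
  simp [fp, hx]

lemma fp_allocation (hT : T.IsTree) : T.Allocation T.fp := by
  intro e he
  have hne := clade_nonempty hT he
  have hcard : ((T.clade e).card : ℝ) ≠ 0 := by
    exact_mod_cast Finset.card_ne_zero_of_mem hne.choose_spec
  calc ∑ x ∈ T.clade e, T.fp x e = ∑ x ∈ T.clade e, ((T.clade e).card : ℝ)⁻¹ := by
        apply Finset.sum_congr rfl; intro x hx; simp [fp, hx]
    _ = 1 := by
        rw [Finset.sum_const, nsmul_eq_mul, mul_inv_cancel₀ hcard]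

lemma score_sum_eq (ℓ : V → ℝ) (γ : V → V → ℝ) (Y : Finset V) :
    ∑ x ∈ Y, T.score ℓ γ x = ∑ e ∈ T.edges, (∑ x ∈ Y, γ x e) * ℓ e := by
  simp only [score]
  rw [Finset.sum_comm]
  simp [Finset.sum_mul]

lemma PD_leaves (hT : T.IsTree) (ℓ : V → ℝ) : T.PD ℓ T.leaves = ∑ e ∈ T.edges, ℓ e := by
  unfold PD
  congr 1
  apply Finset.filter_true_of_mem
  intro e he
  obtain ⟨x, hx, hb⟩ := exists_leaf_below hT (edges_subset_verts he)
  exact ⟨x, hx, hb⟩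

lemma fp_isDivIndex (hT : T.IsTree) (ℓ : V → ℝ) : T.IsDivIndex ℓ T.fp := by
  refine ⟨?_, ?_, ?_, ?_⟩
  · intro x e
    unfold fp
    split
    · positivity
    · exact le_rfl
  · intro x e he hx
    simp [fp, hx]
  · intro e₁ he₁ e₂ he₂ f hf x hx
    have hbij := iso_clade_bijOn hT he₁ he₂ hf
    have hfx : f x ∈ T.clade e₂ := by exact_mod_cast hbij.1 (by exact_mod_cast hx)
    simp only [fp, if_pos hx, if_pos hfx, iso_clade_card hT he₁ he₂ hf]
  · rw [score_sum_eq, PD_leaves hT]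
    apply Finset.sum_congr rfl
    intro e he
    rw [fp_sum_subset e (fun x hx => (mem_clade_iff.mp hx).1),
      fp_allocation hT e he, one_mul]

end PreTree

/-- For a rooted binary phylogenetic `X`-tree with strictly positive edge
lengths and a nonempty proper subset `Y ⊊ X`, the diversity difference `Δ(Y,s)` vanishes for
every diversity index score vector `s` (of an index with the allocation property) if and only if
`Y = X[v]` for some child `v` of the root, i.e. exactly when `Y` is a monophyletic clade whose
most recent common ancestor is adjacent to the root. -/
theorem diversityDifference_eq_zero_iff {V : Type*} (T : PreTree V) (hT : T.IsBinaryTree)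
    (ℓ : V → ℝ) (hℓ : ∀ e ∈ T.edges, 0 < ℓ e)
    (Y : Finset V) (hY : Y ⊆ T.leaves) (hYne : Y.Nonempty) (hYprop : Y ≠ T.leaves) :
    (∀ γ : V → V → ℝ, T.IsDivIndex ℓ γ → T.Allocation γ →
        T.PD ℓ Y - ∑ x ∈ Y, T.score ℓ γ x = 0) ↔
      ∃ v ∈ T.children T.root, Y = T.clade v := by
  classical
  obtain ⟨hTree, hdeg, hrootdeg⟩ := hT
  constructor
  · intro hall
    have h0 := hall T.fp (PreTree.fp_isDivIndex hTree ℓ) (PreTree.fp_allocation hTree)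
    rw [PreTree.score_sum_eq] at h0
    set P : V → Prop := fun e => ∃ x ∈ Y, T.below x e with hP
    have hfp : ∀ e : V, ∑ x ∈ Y, T.fp x e =
        ((Y.filter (· ∈ T.clade e)).card : ℝ) * ((T.clade e).card : ℝ)⁻¹ := by
      intro e
      unfold PreTree.fp
      rw [Finset.sum_ite, Finset.sum_const, Finset.sum_const_zero, add_zero, nsmul_eq_mul]
    have hvanish : ∀ e ∈ T.edges, e ∉ T.edges.filter P → (∑ x ∈ Y, T.fp x e) * ℓ e = 0 := by
      intro e he hne
      have hPe : ¬ P e := fun hp => hne (Finset.mem_filter.mpr ⟨he, hp⟩)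
      have hemp : Y.filter (· ∈ T.clade e) = ∅ := by
        rw [Finset.filter_eq_empty_iff]
        intro x hx hxc
        exact hPe ⟨x, hx, (PreTree.mem_clade_iff.mp hxc).2⟩
      rw [hfp, hemp]; simp
    rw [← Finset.sum_subset (Finset.filter_subset P T.edges) hvanish] at h0
    unfold PreTree.PD at h0
    rw [← Finset.sum_sub_distrib] at h0
    have hnonneg : ∀ e ∈ T.edges.filter P, 0 ≤ ℓ e - (∑ x ∈ Y, T.fp x e) * ℓ e := by
      intro e he'
      obtain ⟨he, _⟩ := Finset.mem_filter.mp he'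
      rw [hfp]
      have hkc : ((Y.filter (· ∈ T.clade e)).card : ℝ) ≤ ((T.clade e).card : ℝ) := by
        exact_mod_cast Finset.card_le_card
          (fun x hx => (Finset.mem_filter.mp hx).2 : Y.filter (· ∈ T.clade e) ⊆ T.clade e)
      have hcpos : (0:ℝ) < ((T.clade e).card : ℝ) := by
        exact_mod_cast Finset.card_pos.mpr (PreTree.clade_nonempty hTree he)
      have h1 : ((Y.filter (· ∈ T.clade e)).card : ℝ) * ((T.clade e).card : ℝ)⁻¹ ≤ 1 := by
        rw [← div_eq_mul_inv]
        exact div_le_one_of_le₀ hkc hcpos.le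
      nlinarith [(hℓ e he).le]
    have hterm := (Finset.sum_eq_zero_iff_of_nonneg hnonneg).mp h0
    have hkey : ∀ e ∈ T.edges, (∃ x ∈ Y, T.below x e) → T.clade e ⊆ Y := by
      intro e he hPe
      have he' : e ∈ T.edges.filter P := Finset.mem_filter.mpr ⟨he, hPe⟩
      have ht := hterm e he'
      rw [hfp] at ht
      have hcpos : (0:ℝ) < ((T.clade e).card : ℝ) := by
        exact_mod_cast Finset.card_pos.mpr (PreTree.clade_nonempty hTree he)
      have hl := hℓ e he
      have h2 : (((Y.filter (· ∈ T.clade e)).card : ℝ) * ((T.clade e).card : ℝ)⁻¹) * ℓ e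
          = 1 * ℓ e := by rw [one_mul]; linarith
      have h3 := mul_right_cancel₀ hl.ne' h2
      rw [mul_inv_eq_one₀ hcpos.ne'] at h3
      have h4 : (Y.filter (· ∈ T.clade e)).card = (T.clade e).card := by exact_mod_cast h3
      have h5 : Y.filter (· ∈ T.clade e) = T.clade e :=
        Finset.eq_of_subset_of_card_le (fun x hx => (Finset.mem_filter.mp hx).2) h4.ge
      intro x hx
      rw [← h5] at hx
      exact (Finset.mem_filter.mp hx).1
    have hrootleaf : T.root ∉ T.leaves := by
      intro h
      have h2 := (Finset.mem_filter.mp h).2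
      rw [h2] at hrootdeg
      simp at hrootdeg
    have getchild : ∀ x ∈ T.leaves, ∃ c ∈ T.children T.root, T.below x c := by
      intro x hx
      have hxv := PreTree.leaves_subset_verts hx
      have hxr : x ≠ T.root := fun h => hrootleaf (h ▸ hx)
      exact PreTree.exists_child_of_below hTree hxv (hTree.2.2.2 x hxv) hxr
    have childedge : ∀ c ∈ T.children T.root, c ∈ T.edges := by
      intro c hc
      obtain ⟨h1, h2, _⟩ := PreTree.mem_children_iff.mp hc
      exact Finset.mem_erase.mpr ⟨h2, h1⟩
    obtain ⟨y, hy⟩ := hYne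
    obtain ⟨v, hvc, hyv⟩ := getchild y (hY hy)
    have hclv : T.clade v ⊆ Y := hkey v (childedge v hvc) ⟨y, hy, hyv⟩
    have hsub2 : Y ⊆ T.clade v := by
      intro z hz
      by_contra hzc
      obtain ⟨w, hwc, hzw⟩ := getchild z (hY hz)
      have hwv : w ≠ v := by
        intro h; subst h
        exact hzc (PreTree.mem_clade_iff.mpr ⟨hY hz, hzw⟩)
      have hclw : T.clade w ⊆ Y := hkey w (childedge w hwc) ⟨z, hz, hzw⟩
      have hch : T.children T.root = {v, w} := by
        refine (Finset.eq_of_subset_of_card_le ?_ ?_).symm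
        · intro u hu
          simp only [Finset.mem_insert, Finset.mem_singleton] at hu
          rcases hu with rfl | rfl
          · exact hvc
          · exact hwc
        · rw [hrootdeg, Finset.card_insert_of_notMem (by simp [Ne.symm hwv]),
            Finset.card_singleton]
      apply hYprop
      refine Finset.Subset.antisymm hY ?_
      intro x hx
      obtain ⟨c, hcc, hxc⟩ := getchild x hx
      rw [hch] at hcc
      simp only [Finset.mem_insert, Finset.mem_singleton] at hcc
      rcases hcc with rfl | rfl
      · exact hclv (PreTree.mem_clade_iff.mpr ⟨hx, hxc⟩)
      · exact hclw (PreTree.mem_clade_iff.mpr ⟨hx, hxc⟩)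
    exact ⟨v, hvc, Finset.Subset.antisymm hsub2 hclv⟩
  · rintro ⟨v, hvc, hYeq⟩
    subst hYeq
    intro γ hγ halloc
    obtain ⟨hpos, hdescnt, hneu, hconv⟩ := hγ
    have hsetEq : T.edges.filter (fun e => ∃ x ∈ T.clade v, T.below x e)
        = T.edges.filter (fun e => T.below e v) := by
      ext e
      simp only [Finset.mem_filter, and_congr_right_iff]
      intro he
      constructor
      · rintro ⟨x, hx, hb⟩
        exact PreTree.below_edge_of_below_rootchild hTree hvc he
          (PreTree.mem_clade_iff.mp hx).2 hb
      · intro hev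
        obtain ⟨x, hx⟩ := PreTree.clade_nonempty hTree he
        exact ⟨x, PreTree.clade_mono hev hx, (PreTree.mem_clade_iff.mp hx).2⟩
    have hID : ∑ x ∈ T.clade v, T.score ℓ γ x
        = ∑ e ∈ T.edges.filter (fun e => T.below e v), ℓ e := by
      rw [PreTree.score_sum_eq]
      have hpt : ∀ e ∈ T.edges, (∑ x ∈ T.clade v, γ x e) * ℓ e
          = if T.below e v then ℓ e else 0 := by
        intro e he
        by_cases hev : T.below e v
        · rw [if_pos hev]
          have h1 : ∑ x ∈ T.clade v, γ x e = ∑ x ∈ T.clade e, γ x e :=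
            (Finset.sum_subset (PreTree.clade_mono hev)
              (fun x _ hnx => hdescnt x e he hnx)).symm
          rw [h1, halloc e he, one_mul]
        · rw [if_neg hev]
          have h1 : ∑ x ∈ T.clade v, γ x e = 0 := by
            apply Finset.sum_eq_zero
            intro x hx
            apply hdescnt x e he
            intro hxe
            exact hev (PreTree.below_edge_of_below_rootchild hTree hvc he
              (PreTree.mem_clade_iff.mp hx).2 (PreTree.mem_clade_iff.mp hxe).2)
          rw [h1, zero_mul]
      rw [Finset.sum_congr rfl hpt, ← Finset.sum_filter]
    unfold PreTree.PD
    rw [hsetEq, hID, sub_self]
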